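/- Consider the remote insulin action dynamics Ẋ(t) = −P₂·X(t) + P₃·I(t) on t ≥ 0 with P₂ ∈ [P̲₂, P̄₂] and P₃ ∈ [P̲₃, P̄₃] for positive bounds. Let X̂, Î be differentiable estimate signals with |X(t) − X̂(t)| ≤ Δ_X, |I(t) − Î(t)| ≤ Δ_I, and |Ẋ(t) − d/dt X̂(t)| ≤ Δ̇_X for all t. Let X_ref be a differentiable reference with 0 ≤ X_ref(t) ≤ κ₁ and |Ẋ_ref(t)| ≤ M_X for all t, let ρ_X(t) = (p_X − q_X)e^{−μ_X t} + q_X be the funnel with 0 < q_X < p_X and μ_X > 0, define the normalized error e_X(t) = (X_ref(t) − X̂(t))/ρ_X(t), and let I_ref(t) = κ₂·Ψ(e_X(t)). Suppose the plasma-insulin funnel invariance from Stage I holds, i.e., |I_ref(t) − Î(t)| < ρ_I(t) ≤ p_I for all t ≥ 0, suppose |e_X(0)| < 1, κ₂ − p_I − Δ_I ≥ 0, κ₁ − q_X + Δ_X ≥ 0, q_X − Δ_X ≥ 0, and suppose the feasibility conditions hold: (FC2a) P̲₃(κ₂ − p_I − Δ_I) − P̄₂(κ₁ − q_X + Δ_X)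 > M_X + μ_X(p_X − q_X) + Δ̇_X; (FC2b) P̲₂(q_X − Δ_X) − P̄₃(p_I + Δ_I) > M_X + μ_X(p_X − q_X) + Δ̇_X. Then |X_ref(t) − X̂(t)| < ρ_X(t) for all t ≥ 0. -/

import Mathlib

/-!
A first-exit argument. Write `v = X_ref − X̂`. If `|v|` ever reached `ρ_X`, it would do so at a
first time `t`, and there `v` would have to leave the funnel, i.e. `v'(t) ≥ ρ_X'(t)` on the upper
boundary (`≤ −ρ_X'(t)` on the lower one). But on the upper boundary `e_X = 1`, so `Ψ` saturates,
`I_ref = κ₂`, and the Stage I funnel forces `I > κ₂ − p_I − Δ_I`, while `X ≤ κ₁ − q_X + Δ_X`;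
FC2a then makes the drift `−P₂X + P₃I` so large that `v' < ρ_X'`. The lower boundary is
symmetric, with `I_ref = 0` and FC2b.
-/

open Filter Set Topology

theorem HasDerivAt.nonneg_of_eventually_le_left {g : ℝ → ℝ} {g' t : ℝ} (hd : HasDerivAt g g' t)
    (hle : ∀ᶠ s in 𝓝[<] t, g s ≤ g t) : 0 ≤ g' := by
  have hslope : Tendsto (slope g t) (𝓝[<] t) (𝓝 g') :=
    (hasDerivAt_iff_tendsto_slope.mp hd).mono_left (nhdsWithin_mono t fun _ hs => ne_of_lt hs)
  refine ge_of_tendsto hslope ?_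
  filter_upwards [hle, self_mem_nhdsWithin] with s hs hst
  rw [slope_def_field]
  exact div_nonneg_of_nonpos (sub_nonpos.2 hs) (sub_nonpos.2 (le_of_lt hst))

theorem neg_of_hasDerivAt_neg_at_zeros {g g' : ℝ → ℝ} {a : ℝ}
    (hg : ∀ t ≥ a, HasDerivAt g (g' t) t) (ha : g a < 0)
    (hzero : ∀ t ≥ a, g t = 0 → g' t < 0) : ∀ t ≥ a, g t < 0 := by
  intro t ht
  have hle : ∀ s ∈ Icc a t, g s ≤ 0 :=
    image_le_of_deriv_right_lt_deriv_boundary (B := fun _ => 0) (B' := fun _ => 0)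
      (fun s hs => (hg s hs.1).continuousAt.continuousWithinAt)
      (fun s hs => (hg s hs.1).hasDerivWithinAt) ha.le (fun _ => hasDerivAt_const _ _)
      (fun s hs hs0 => hzero s hs.1 hs0)
  rcases (hle t ⟨ht, le_rfl⟩).lt_or_eq with hlt | heq
  · exact hlt
  have hat : a < t := ht.lt_of_ne (by rintro rfl; linarith)
  have hleft : ∀ᶠ s in 𝓝[<] t, g s ≤ g t := by
    filter_upwards [Ioo_mem_nhdsLT hat] with s hs
    rw [heq]
    exact hle s ⟨hs.1.le, hs.2.le⟩
  linarith [(hg t ht).nonneg_of_eventually_le_left hleft, hzero t ht heq]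

theorem abs_lt_of_hasDerivAt_boundary {v v' ρ ρ' : ℝ → ℝ} {a : ℝ}
    (hv : ∀ t ≥ a, HasDerivAt v (v' t) t) (hρ : ∀ t ≥ a, HasDerivAt ρ (ρ' t) t)
    (ha : |v a| < ρ a) (hupper : ∀ t ≥ a, v t = ρ t → v' t < ρ' t)
    (hlower : ∀ t ≥ a, v t = -ρ t → -ρ' t < v' t) : ∀ t ≥ a, |v t| < ρ t := by
  have hup := neg_of_hasDerivAt_neg_at_zeros (g := fun t => v t - ρ t)
    (fun t ht => (hv t ht).sub (hρ t ht))
    (by linarith [le_abs_self (v a)]) fun t ht h => by linarith [hupper t ht (by linarith)]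
  have hlow := neg_of_hasDerivAt_neg_at_zeros (g := fun t => -v t - ρ t)
    (fun t ht => (hv t ht).neg.sub (hρ t ht))
    (by linarith [neg_abs_le (v a)]) fun t ht h => by linarith [hlower t ht (by linarith)]
  intro t ht
  exact abs_lt.2 ⟨by linarith [hlow t ht], by linarith [hup t ht]⟩

section Funnel

variable {p q μ : ℝ}

noncomputable def funnel (p q μ t : ℝ) : ℝ := (p - q) * Real.exp (-μ * t) + q

theorem hasDerivAt_funnel (t : ℝ) :
    HasDerivAt (funnel p q μ) (-μ * (funnel p q μ t - q)) t := by
  have h := ((((hasDerivAt_id t).const_mul (-μ)).exp).const_mul (p - q)).add_const q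
  refine h.congr_deriv ?_
  simp only [funnel, id]
  ring

theorem lt_funnel (hqp : q < p) (t : ℝ) : q < funnel p q μ t := by
  unfold funnel
  have := mul_pos (sub_pos.2 hqp) (Real.exp_pos (-μ * t))
  linarith

theorem funnel_le (hqp : q ≤ p) (hμ : 0 ≤ μ) {t : ℝ} (ht : 0 ≤ t) : funnel p q μ t ≤ p := by
  unfold funnel
  have hexp : Real.exp (-μ * t) ≤ 1 :=
    Real.exp_le_one_iff.2 (mul_nonpos_of_nonpos_of_nonneg (neg_nonpos.2 hμ) ht)
  linarith [mul_le_of_le_one_right (sub_nonneg.2 hqp) hexp]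

end Funnel

section Drift

variable {P2 P3 x i xhat ihat xref Δ_X Δ_I p_I q_X ρ ρI : ℝ}

theorem drift_ge_of_upper_boundary {P2bar P3low κ₁ κ₂ : ℝ}
    (hP2 : 0 ≤ P2 ∧ P2 ≤ P2bar) (hP3 : 0 ≤ P3low ∧ P3low ≤ P3)
    (hx : |x - xhat| ≤ Δ_X) (hi : |i - ihat| ≤ Δ_I) (hxref : xref ≤ κ₁) (hρ : q_X < ρ)
    (hbd : xref - xhat = ρ) (hI : |κ₂ - ihat| < ρI) (hρI : ρI ≤ p_I)
    (h1 : 0 ≤ κ₂ - p_I - Δ_I) (h2 : 0 ≤ κ₁ - q_X + Δ_X) :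
    P3low * (κ₂ - p_I - Δ_I) - P2bar * (κ₁ - q_X + Δ_X) ≤ -(P2 * x) + P3 * i := by
  have hi_ge : κ₂ - p_I - Δ_I ≤ i := by linarith [(abs_le.1 hi).1, (abs_lt.1 hI).2]
  have hx_le : x ≤ κ₁ - q_X + Δ_X := by linarith [(abs_le.1 hx).2]
  have hP3i := mul_le_mul hP3.2 hi_ge h1 (hP3.1.trans hP3.2)
  have hP2x := (mul_le_mul_of_nonneg_left hx_le hP2.1).trans (mul_le_mul_of_nonneg_right hP2.2 h2)
  linarith

theorem drift_le_of_lower_boundary {P2low P3bar : ℝ}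
    (hP2 : P2low ≤ P2) (hP3 : 0 ≤ P3 ∧ P3 ≤ P3bar) (hP2nn : 0 ≤ P2)
    (hx : |x - xhat| ≤ Δ_X) (hi : |i - ihat| ≤ Δ_I) (hxref : 0 ≤ xref) (hρ : q_X < ρ)
    (hbd : xref - xhat = -ρ) (hI : |ihat| < ρI) (hρI : ρI ≤ p_I) (h3 : 0 ≤ q_X - Δ_X) :
    -(P2 * x) + P3 * i ≤ P3bar * (p_I + Δ_I) - P2low * (q_X - Δ_X) := by
  have hc : 0 ≤ p_I + Δ_I := by
    linarith [(abs_nonneg ihat).trans_lt hI, (abs_nonneg (i - ihat)).trans hi]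
  have hi_le : i ≤ p_I + Δ_I := by linarith [(abs_le.1 hi).2, (abs_lt.1 hI).2]
  have hx_ge : q_X - Δ_X ≤ x := by linarith [(abs_le.1 hx).1]
  have hP2x := mul_le_mul hP2 hx_ge h3 hP2nn
  have hP3i := (mul_le_mul_of_nonneg_left hi_le hP3.1).trans (mul_le_mul_of_nonneg_right hP3.2 hc)
  linarith

end Drift

theorem stageII_remote_insulin_funnel_invariance_general
    -- the bounded transformation function Ψ
    (Ψ : ℝ → ℝ)
    (hΨ0 : ∀ s ≤ (0 : ℝ), Ψ s = 0)
    (hΨ1 : ∀ s ≥ (1 : ℝ), Ψ s = 1)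
    -- parameters
    (P2 P2low P2bar P3 P3low P3bar κ₁ κ₂ Δ_X Δ_I Δ'_X M_X : ℝ)
    (hP2low : 0 < P2low) (hP2 : P2low ≤ P2 ∧ P2 ≤ P2bar)
    (hP3low : 0 < P3low) (hP3 : P3low ≤ P3 ∧ P3 ≤ P3bar)
    -- funnel parameters
    (p_X q_X μ_X p_I : ℝ)
    (hqX : 0 < q_X) (hpX : q_X < p_X) (hμX : 0 < μ_X)
    -- signals and definitions
    (X I Xhat Ihat Xhat' Xref Xref' : ℝ → ℝ)
    (ρX : ℝ → ℝ) (hρXdef : ∀ t, ρX t = (p_X - q_X) * Real.exp (-μ_X * t) + q_X)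
    (eX : ℝ → ℝ) (heX : ∀ t, eX t = (Xref t - Xhat t) / ρX t)
    (Iref : ℝ → ℝ) (hIrefdef : ∀ t, Iref t = κ₂ * Ψ (eX t))
    (ρI : ℝ → ℝ)
    -- estimates: differentiable with bounded position/derivative errors
    (hXhat : ∀ t ≥ (0 : ℝ), HasDerivAt Xhat (Xhat' t) t)
    (hXerr : ∀ t ≥ (0 : ℝ), |X t - Xhat t| ≤ Δ_X)
    (hIerr : ∀ t ≥ (0 : ℝ), |I t - Ihat t| ≤ Δ_I)
    (hXerr' : ∀ t ≥ (0 : ℝ), |(-(P2 * X t) + P3 * I t) - Xhat' t| ≤ Δ'_X)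
    -- reference: differentiable, bounded, with bounded derivative
    (hXrefrange : ∀ t ≥ (0 : ℝ), 0 ≤ Xref t ∧ Xref t ≤ κ₁)
    (hXref' : ∀ t ≥ (0 : ℝ), HasDerivAt Xref (Xref' t) t)
    (hXrefbnd : ∀ t ≥ (0 : ℝ), |Xref' t| ≤ M_X)
    -- Stage I funnel invariance: |I_ref − Î| < ρ_I ≤ p_I on t ≥ 0
    (hStageI : ∀ t ≥ (0 : ℝ), |Iref t - Ihat t| < ρI t ∧ ρI t ≤ p_I)
    -- initial condition and sign conditions
    (hinitX : |eX 0| < 1)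
    (h1 : 0 ≤ κ₂ - p_I - Δ_I) (h2 : 0 ≤ κ₁ - q_X + Δ_X) (h3 : 0 ≤ q_X - Δ_X)
    -- feasibility conditions
    (hFC2a : P3low * (κ₂ - p_I - Δ_I) - P2bar * (κ₁ - q_X + Δ_X)
        > M_X + μ_X * (p_X - q_X) + Δ'_X)
    (hFC2b : P2low * (q_X - Δ_X) - P3bar * (p_I + Δ_I)
        > M_X + μ_X * (p_X - q_X) + Δ'_X) :
    ∀ t ≥ (0 : ℝ), |Xref t - Xhat t| < ρX t := by
  obtain rfl : ρX = funnel p_X q_X μ_X := funext hρXdef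
  have hρpos : ∀ t, 0 < funnel p_X q_X μ_X t := fun t => hqX.trans (lt_funnel hpX t)
  have hρ'bound : ∀ t ≥ (0 : ℝ), μ_X * (funnel p_X q_X μ_X t - q_X) ≤ μ_X * (p_X - q_X) :=
    fun t ht => mul_le_mul_of_nonneg_left (by linarith [funnel_le hpX.le hμX.le ht]) hμX.le
  have hP2nn : 0 ≤ P2 := hP2low.le.trans hP2.1
  refine abs_lt_of_hasDerivAt_boundary (v := fun t => Xref t - Xhat t)
    (fun t ht => (hXref' t ht).sub (hXhat t ht)) (fun t _ => hasDerivAt_funnel t) ?_ ?_ ?_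
  · rwa [heX, abs_div, abs_of_pos (hρpos 0), div_lt_one (hρpos 0)] at hinitX
  · intro t ht hvt
    have hIref : Iref t = κ₂ := by
      rw [hIrefdef, heX, hvt, div_self (hρpos t).ne', hΨ1 1 le_rfl, mul_one]
    have hdrift := drift_ge_of_upper_boundary ⟨hP2nn, hP2.2⟩ ⟨hP3low.le, hP3.1⟩ (hXerr t ht)
      (hIerr t ht) (hXrefrange t ht).2 (lt_funnel hpX t) hvt (hIref ▸ (hStageI t ht).1)
      (hStageI t ht).2 h1 h2
    linarith [(abs_le.1 (hXrefbnd t ht)).2, (abs_le.1 (hXerr' t ht)).2, hρ'bound t ht]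
  · intro t ht hvt
    have hIref : Iref t = 0 := by
      rw [hIrefdef, heX, hvt, neg_div, div_self (hρpos t).ne', hΨ0 (-1) (by norm_num), mul_zero]
    have hdrift := drift_le_of_lower_boundary hP2.1 ⟨hP3low.le.trans hP3.1, hP3.2⟩ hP2nn
      (hXerr t ht) (hIerr t ht) (hXrefrange t ht).1 (lt_funnel hpX t) hvt
      (by simpa [hIref] using (hStageI t ht).1) (hStageI t ht).2 h3
    linarith [(abs_le.1 (hXrefbnd t ht)).1, (abs_le.1 (hXerr' t ht)).1, hρ'bound t ht]

/-- **Stage II of the proof of Theorem 1: invariance of the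
remote-insulin-action funnel.** For the dynamics `Ẋ = −P₂X + P₃I` with the
reference `I_ref(t) = κ₂·Ψ(e_X(t))`, bounded estimation errors, the Stage I
plasma-insulin funnel invariance, and the feasibility conditions FC2a–FC2b,
the tracking error `X_ref − X̂` stays strictly inside the funnel `ρ_X` for all
`t ≥ 0`. -/
theorem stageII_remote_insulin_funnel_invariance
    -- the bounded transformation function Ψ
    (Ψ : ℝ → ℝ)
    (hΨC1 : ContDiff ℝ 1 Ψ)
    (hΨmono : Monotone Ψ)
    (hΨ0 : ∀ s ≤ (0 : ℝ), Ψ s = 0)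
    (hΨ1 : ∀ s ≥ (1 : ℝ), Ψ s = 1)
    (hΨrange : ∀ s, 0 ≤ Ψ s ∧ Ψ s ≤ 1)
    -- parameters
    (P2 P2low P2bar P3 P3low P3bar κ₁ κ₂ Δ_X Δ_I Δ'_X M_X : ℝ)
    (hP2low : 0 < P2low) (hP2 : P2low ≤ P2 ∧ P2 ≤ P2bar)
    (hP3low : 0 < P3low) (hP3 : P3low ≤ P3 ∧ P3 ≤ P3bar)
    (hκ₁ : 0 < κ₁) (hκ₂ : 0 < κ₂)
    (hΔX : 0 < Δ_X) (hΔI : 0 < Δ_I) (hΔ'X : 0 < Δ'_X) (hMX : 0 < M_X)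
    -- funnel parameters
    (p_X q_X μ_X p_I q_I μ_I : ℝ)
    (hqX : 0 < q_X) (hpX : q_X < p_X) (hμX : 0 < μ_X)
    (hqI : 0 < q_I) (hpI : q_I < p_I) (hμI : 0 < μ_I)
    -- signals and definitions
    (X I Xhat Ihat Xhat' Xref Xref' : ℝ → ℝ)
    (ρX : ℝ → ℝ) (hρXdef : ∀ t, ρX t = (p_X - q_X) * Real.exp (-μ_X * t) + q_X)
    (eX : ℝ → ℝ) (heX : ∀ t, eX t = (Xref t - Xhat t) / ρX t)
    (Iref : ℝ → ℝ) (hIrefdef : ∀ t, Iref t = κ₂ * Ψ (eX t))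
    (ρI : ℝ → ℝ) (hρIdef : ∀ t, ρI t = (p_I - q_I) * Real.exp (-μ_I * t) + q_I)
    -- remote insulin action dynamics on t ≥ 0
    (hdynX : ∀ t ≥ (0 : ℝ), HasDerivAt X (-(P2 * X t) + P3 * I t) t)
    -- estimates: differentiable with bounded position/derivative errors
    (hXhat : ∀ t ≥ (0 : ℝ), HasDerivAt Xhat (Xhat' t) t)
    (hXerr : ∀ t ≥ (0 : ℝ), |X t - Xhat t| ≤ Δ_X)
    (hIerr : ∀ t ≥ (0 : ℝ), |I t - Ihat t| ≤ Δ_I)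
    (hXerr' : ∀ t ≥ (0 : ℝ), |(-(P2 * X t) + P3 * I t) - Xhat' t| ≤ Δ'_X)
    -- reference: differentiable, bounded, with bounded derivative
    (hXrefrange : ∀ t ≥ (0 : ℝ), 0 ≤ Xref t ∧ Xref t ≤ κ₁)
    (hXref' : ∀ t ≥ (0 : ℝ), HasDerivAt Xref (Xref' t) t)
    (hXrefbnd : ∀ t ≥ (0 : ℝ), |Xref' t| ≤ M_X)
    -- Stage I funnel invariance: |I_ref − Î| < ρ_I ≤ p_I on t ≥ 0
    (hStageI : ∀ t ≥ (0 : ℝ), |Iref t - Ihat t| < ρI t ∧ ρI t ≤ p_I)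
    -- initial condition and sign conditions
    (hinitX : |eX 0| < 1)
    (h1 : 0 ≤ κ₂ - p_I - Δ_I) (h2 : 0 ≤ κ₁ - q_X + Δ_X) (h3 : 0 ≤ q_X - Δ_X)
    -- feasibility conditions
    (hFC2a : P3low * (κ₂ - p_I - Δ_I) - P2bar * (κ₁ - q_X + Δ_X)
        > M_X + μ_X * (p_X - q_X) + Δ'_X)
    (hFC2b : P2low * (q_X - Δ_X) - P3bar * (p_I + Δ_I)
        > M_X + μ_X * (p_X - q_X) + Δ'_X) :
    ∀ t ≥ (0 : ℝ), |Xref t - Xhat t| < ρX t :=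
  stageII_remote_insulin_funnel_invariance_general Ψ hΨ0 hΨ1 P2 P2low P2bar P3 P3low P3bar κ₁ κ₂ Δ_X
    Δ_I Δ'_X M_X hP2low hP2 hP3low hP3 p_X q_X μ_X p_I hqX hpX hμX X I Xhat Ihat Xhat' Xref Xref' ρX
    hρXdef eX heX Iref hIrefdef ρI hXhat hXerr hIerr hXerr' hXrefrange hXref' hXrefbnd hStageI
    hinitX h1 h2 h3 hFC2a hFC2b
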